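/- Let V = ℝ^{r_1} × ℂ^{r_2}, and for v ∈ V let T(v) = {l : |v^{(l)}| > 1} and H(v) = ∏_{l ∈ T(v), l ≤ r_1} |v^{(l)}| · ∏_{l ∈ T(v), l > r_1} |v^{(l)}|². Then for any α < −1 and A > 0, the integral of H(v)^α over the set {v ∈ V : H(v) ≤ A} is bounded by a constant depending only on α, r_1, r_2, uniformly in A. -/

import Mathlib

/-!
Off the unit ball a coordinate contributes `|v⁽ˡ⁾|` (resp. `|v⁽ˡ⁾|²`) to `H(v)` and inside it
contributes `1`, so `H(v)^α = ∏ₗ max(|v⁽ˡ⁾|, 1)^α · ∏ₗ max(|v⁽ˡ⁾|, 1)^{2α}` factors over the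
coordinates. Each factor is integrable on `ℝ` resp. `ℂ ≅ ℝ²` because `α < -1`, so `H^α` is
integrable on all of `V`, and its integral over `V` bounds the integral over any subset.
-/

open MeasureTheory Finset Module

lemma Finset.prod_filter_one_lt_eq_prod_max {ι : Type*} (s : Finset ι) (f : ι → ℝ) :
    ∏ l ∈ s with 1 < f l, f l = ∏ l ∈ s, max (f l) 1 := by
  rw [prod_filter]
  refine prod_congr rfl fun l _ => ?_
  split_ifs with h
  · exact (max_eq_left h.le).symm
  · exact (max_eq_right (not_lt.1 h)).symm

lemma rpow_prod_filter_one_lt_eq_prod_max {ι κ : Type*} [Fintype ι] [Fintype κ]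
    (x : ι → ℝ) (z : κ → ℂ) (α : ℝ) :
    ((∏ l with 1 < |x l|, |x l|) * ∏ l with 1 < ‖z l‖, ‖z l‖ ^ 2) ^ α =
      (∏ l, max |x l| 1 ^ α) * ∏ l, max ‖z l‖ 1 ^ (2 * α) := by
  have hmax {a : ℝ} : 0 ≤ max a 1 := zero_le_one.trans (le_max_right _ _)
  rw [prod_pow, prod_filter_one_lt_eq_prod_max, prod_filter_one_lt_eq_prod_max,
    Real.mul_rpow (prod_nonneg fun _ _ => hmax) (pow_nonneg (prod_nonneg fun _ _ => hmax) _),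
    ← Real.finsetProd_rpow _ _ fun _ _ => hmax, ← prod_pow,
    ← Real.finsetProd_rpow _ _ fun _ _ => pow_nonneg hmax _]
  simp_rw [← Real.rpow_natCast_mul hmax, Nat.cast_ofNat]

lemma rpow_max_one_le {a r : ℝ} (ha : 0 ≤ a) (hr : 0 ≤ r) :
    max a 1 ^ (-r) ≤ 2 ^ r * (1 + a) ^ (-r) := by
  have hmid : (1 + a) / 2 ≤ max a 1 := by
    rcases le_total a 1 with h | h
    · rw [max_eq_right h]; linarith
    · rw [max_eq_left h]; linarith
  calc max a 1 ^ (-r) ≤ ((1 + a) / 2) ^ (-r) :=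
        Real.rpow_le_rpow_of_nonpos (by positivity) hmid (neg_nonpos.2 hr)
    _ = 2 ^ r * (1 + a) ^ (-r) := by
        rw [Real.div_rpow (by positivity) zero_le_two, Real.rpow_neg zero_le_two,
          div_eq_mul_inv, inv_inv, mul_comm]

lemma integrable_max_norm_one_rpow {E : Type*} [NormedAddCommGroup E] [NormedSpace ℝ E]
    [FiniteDimensional ℝ E] [MeasurableSpace E] [BorelSpace E] (μ : Measure E)
    [μ.IsAddHaarMeasure] {r : ℝ} (hr : (finrank ℝ E : ℝ) < r) :
    Integrable (fun x : E => max ‖x‖ 1 ^ (-r)) μ := by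
  refine ((integrable_one_add_norm hr).const_mul (2 ^ r)).mono'
    (Measurable.aestronglyMeasurable (by fun_prop)) (ae_of_all _ fun x => ?_)
  rw [Real.norm_of_nonneg (Real.rpow_nonneg (zero_le_one.trans (le_max_right _ _)) _)]
  exact rpow_max_one_le (norm_nonneg x) ((Nat.cast_nonneg _).trans hr.le)

/-- Let `V = ℝ^{r₁} × ℂ^{r₂}` and, for `v ∈ V`, let
`H(v) = ∏_{|v⁽ˡ⁾|>1, l real} |v⁽ˡ⁾| · ∏_{|v⁽ˡ⁾|>1, l complex} |v⁽ˡ⁾|²`. Then for `α < −1`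
the integral of `H(v)^α` over `{v : H(v) ≤ A}` is bounded uniformly in `A > 0`. -/
theorem stmt11 (r₁ r₂ : ℕ) (α : ℝ) (hα : α < -1) :
    ∃ C : ℝ, ∀ A : ℝ, 0 < A →
      (∫ v in {v : (Fin r₁ → ℝ) × (Fin r₂ → ℂ) |
          (∏ l ∈ Finset.univ.filter (fun l => 1 < |v.1 l|), |v.1 l|) *
            (∏ l ∈ Finset.univ.filter (fun l => 1 < ‖v.2 l‖),
              ‖v.2 l‖ ^ 2) ≤ A},
        ((∏ l ∈ Finset.univ.filter (fun l => 1 < |v.1 l|), |v.1 l|) *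
          (∏ l ∈ Finset.univ.filter (fun l => 1 < ‖v.2 l‖),
            ‖v.2 l‖ ^ 2)) ^ α ∂volume) ≤ C := by
  set F : (Fin r₁ → ℝ) × (Fin r₂ → ℂ) → ℝ := fun v =>
    (∏ l, max |v.1 l| 1 ^ α) * ∏ l, max ‖v.2 l‖ 1 ^ (2 * α)
  have hreal : Integrable (fun x : ℝ => max |x| 1 ^ α) := by
    simpa using integrable_max_norm_one_rpow volume (E := ℝ) (r := -α) (by simp; linarith)
  have hcomplex : Integrable (fun z : ℂ => max ‖z‖ 1 ^ (2 * α)) := by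
    simpa using integrable_max_norm_one_rpow volume (E := ℂ) (r := -(2 * α)) (by simp; linarith)
  have hF : Integrable F :=
    (Integrable.fintype_prod fun _ => hreal).mul_prod (Integrable.fintype_prod fun _ => hcomplex)
  refine ⟨∫ v, F v, fun A _ => ?_⟩
  simp only [rpow_prod_filter_one_lt_eq_prod_max]
  exact setIntegral_le_integral hF (ae_of_all _ fun v => by positivity)
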